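/- For any three-qudit pure state |ψ⟩ and q ≥ 2, the three marginal q-concurrences satisfy the triangle inequalities |C_q^{j|ik} - C_q^{k|ij}| ≤ C_q^{i|jk} ≤ C_q^{j|ik} + C_q^{k|ij} for all permutations {i,j,k} of {1,2,3}; in particular the three quantities can form the side lengths of a (possibly degenerate) triangle. -/

import Mathlib

open scoped BigOperators

/-- `Tr(ρ^q)` for a Hermitian matrix `ρ`, defined via its spectral decomposition. -/
noncomputable def traceRpow {m : Type*} [Fintype m] [DecidableEq m]
    (ρ : Matrix m m ℂ) (h : ρ.IsHermitian) (q : ℝ) : ℝ :=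
  ∑ i, (h.eigenvalues i) ^ q

/-- `F_q(ρ) = 1 - Tr(ρ^q)`; for the reduced state `ρ_j` of a pure state this is the
`q`-concurrence across the cut `j | rest`. -/
noncomputable def FqEnt {m : Type*} [Fintype m] [DecidableEq m]
    (ρ : Matrix m m ℂ) (h : ρ.IsHermitian) (q : ℝ) : ℝ :=
  1 - traceRpow ρ h q

/-- The single-party reduced density matrix `ρ_j` of a pure multipartite state `ψ`. -/
noncomputable def reduced1 {n : ℕ} (d : Fin n → ℕ) (ψ : (∀ i, Fin (d i)) → ℂ)
    (j : Fin n) : Matrix (Fin (d j)) (Fin (d j)) ℂ :=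
  fun x y => ∑ f : ∀ i, Fin (d i),
    if f j = x then ψ f * star (ψ (Function.update f j y)) else 0

/-!
For a pure state on `H_i ⊗ H_j ⊗ H_k`, write its coefficients as a matrix `Ψ` with rows indexed
by `(j, k)` and columns by `i`. Then `ρ_jk = Ψ Ψᴴ` and `ρ_i = Ψᵀ Ψᵀᴴ = (Ψᴴ Ψ)ᵀ` have the same
nonzero spectrum, so `Tr ρ_i^q = Tr ρ_jk^q`, and each of the triangle inequalities is the
subadditivity `Tr ρ_j^q + Tr ρ_k^q ≤ 1 + Tr ρ_jk^q` for a suitable choice of `i`.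

For subadditivity, write `ρ_jk` in a product eigenbasis of `ρ_j` and `ρ_k`. Its diagonal `P` is a
probability distribution on pairs whose marginals are the spectra `a`, `b` of `ρ_j` and `ρ_k`.
Classically `∑ a_x^q + ∑ b_y^q ≤ 1 + ∑ P_xy^q` for `q ≥ 2`, since `a_x + b_y ≤ 1 + P_xy` and
`t ↦ t^(q-1)` is convex; and `∑ P_xy^q ≤ Tr ρ_jk^q` because the diagonal of a Hermitian matrix is
a doubly stochastic average of its eigenvalues.
-/

open Finset Matrix
open scoped Kronecker ComplexOrder

theorem ConvexOn.map_add_map_le_map_add_map {s : Set ℝ} {f : ℝ → ℝ} (hf : ConvexOn ℝ s f)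
    {a b x y : ℝ} (ha : a ∈ s) (hb : b ∈ s) (hax : a ≤ x) (hxb : x ≤ b) (hxy : x + y = a + b) :
    f x + f y ≤ f a + f b := by
  rcases hax.trans hxb |>.eq_or_lt with rfl | hab
  · obtain rfl : x = a := le_antisymm hxb hax
    obtain rfl : y = x := by linarith
    rfl
  set θ := (b - x) / (b - a)
  have hθ₀ : 0 ≤ θ := div_nonneg (by linarith) (by linarith)
  have hθ₁ : 0 ≤ 1 - θ := by
    rw [sub_nonneg, div_le_one (by linarith)]; linarith
  have hθ : θ * (b - a) = b - x := div_mul_cancel₀ _ (by linarith)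
  have hx : θ • a + (1 - θ) • b = x := by
    simp only [smul_eq_mul]; linear_combination -hθ
  have hy : (1 - θ) • a + θ • b = y := by
    simp only [smul_eq_mul]; linear_combination hθ - hxy
  have h₁ := hf.2 ha hb hθ₀ hθ₁ (by ring)
  have h₂ := hf.2 ha hb hθ₁ hθ₀ (by ring)
  rw [hx] at h₁
  rw [hy] at h₂
  simp only [smul_eq_mul] at h₁ h₂
  linarith

theorem Real.rpow_add_rpow_le_one_add_rpow {a b c r : ℝ} (ha : 0 ≤ a) (ha₁ : a ≤ 1) (hb : 0 ≤ b)
    (hb₁ : b ≤ 1) (hc : 0 ≤ c) (habc : a + b ≤ 1 + c) (hr : 1 ≤ r) :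
    a ^ r + b ^ r ≤ 1 + c ^ r := by
  rcases le_or_gt (a + b) 1 with hab | hab
  · have := Real.rpow_le_self_of_le_one ha ha₁ hr
    have := Real.rpow_le_self_of_le_one hb hb₁ hr
    have := Real.rpow_nonneg hc r
    linarith
  · have hmaj := (convexOn_rpow hr).map_add_map_le_map_add_map (a := a + b - 1) (b := 1)
      (x := a) (y := b) (by simp; linarith) (by simp) (by linarith) ha₁ (by ring)
    have hmono := Real.rpow_le_rpow (by linarith) (show a + b - 1 ≤ c by linarith)
      (by linarith : (0 : ℝ) ≤ r)
    rw [Real.one_rpow] at hmaj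
    linarith

theorem ConvexOn.sum_map_mulVec_le {n : Type*} [Fintype n] [DecidableEq n] {M : Matrix n n ℝ}
    (hM : M ∈ doublyStochastic ℝ n) {s : Set ℝ} {f : ℝ → ℝ} (hf : ConvexOn ℝ s f) {x : n → ℝ}
    (hx : ∀ i, x i ∈ s) : ∑ i, f ((M *ᵥ x) i) ≤ ∑ i, f (x i) :=
  calc ∑ i, f ((M *ᵥ x) i) ≤ ∑ i, ∑ j, M i j * f (x j) := by
        refine sum_le_sum fun i _ => ?_
        simpa [mulVec, dotProduct] using hf.map_sum_le (t := univ) (w := M i) (p := x)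
          (fun j _ => nonneg_of_mem_doublyStochastic hM) (sum_row_of_mem_doublyStochastic hM i)
          (fun j _ => hx j)
    _ = ∑ j, f (x j) := by
        rw [sum_comm]
        simp [← sum_mul, sum_col_of_mem_doublyStochastic hM]

theorem sum_rpow_sum_add_sum_rpow_sum_le {X Y : Type*} [Fintype X] [Fintype Y] {P : X → Y → ℝ}
    (hP : ∀ x y, 0 ≤ P x y) (hsum : ∑ x, ∑ y, P x y = 1) {q : ℝ} (hq : 2 ≤ q) :
    ∑ x, (∑ y, P x y) ^ q + ∑ y, (∑ x, P x y) ^ q ≤ 1 + ∑ x, ∑ y, P x y ^ q := by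
  classical
  set a : X → ℝ := fun x => ∑ y, P x y
  set b : Y → ℝ := fun y => ∑ x, P x y
  have ha : ∀ x, 0 ≤ a x := fun x => sum_nonneg fun y _ => hP x y
  have hb : ∀ y, 0 ≤ b y := fun y => sum_nonneg fun x _ => hP x y
  have hPa : ∀ x y, P x y ≤ a x := fun x y => single_le_sum (fun y _ => hP x y) (mem_univ y)
  have ha₁ : ∀ x, a x ≤ 1 := fun x => hsum ▸ single_le_sum (fun x _ => ha x) (mem_univ x)
  have hb₁ : ∀ y, b y ≤ 1 := fun y => by
    have hsum' : ∑ y, b y = 1 := by rw [← hsum, sum_comm]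
    exact hsum' ▸ single_le_sum (fun y _ => hb y) (mem_univ y)
  -- inclusion–exclusion: the mass of row `x` and column `y` together is at most `1`
  have hab : ∀ x y, a x + b y ≤ 1 + P x y := fun x y => by
    have : b y - P x y ≤ 1 - a x :=
      calc b y - P x y = ∑ x' ∈ univ.erase x, P x' y := (sum_erase_eq_sub (mem_univ x)).symm
        _ ≤ ∑ x' ∈ univ.erase x, a x' := sum_le_sum fun x' _ => hPa x' y
        _ = 1 - a x := by rw [sum_erase_eq_sub (mem_univ x), hsum]
    linarith
  have hpow : ∀ {t : ℝ}, 0 ≤ t → t ^ q = t * t ^ (q - 1) := fun ht => by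
    rw [← Real.rpow_one_add' ht (by linarith), add_sub_cancel]
  have ha_pow : ∀ x, a x ^ q = ∑ y, P x y * a x ^ (q - 1) := fun x => by
    rw [hpow (ha x), sum_mul]
  have hb_pow : ∀ y, b y ^ q = ∑ x, P x y * b y ^ (q - 1) := fun y => by
    rw [hpow (hb y), sum_mul]
  calc ∑ x, a x ^ q + ∑ y, b y ^ q
      = ∑ x, ∑ y, P x y * (a x ^ (q - 1) + b y ^ (q - 1)) := by
        simp_rw [ha_pow, hb_pow, mul_add, sum_add_distrib]
        rw [sum_comm (f := fun y x => P x y * b y ^ (q - 1))]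
    _ ≤ ∑ x, ∑ y, P x y * (1 + P x y ^ (q - 1)) := by
        refine sum_le_sum fun x _ => sum_le_sum fun y _ => mul_le_mul_of_nonneg_left ?_ (hP x y)
        exact Real.rpow_add_rpow_le_one_add_rpow (ha x) (ha₁ x) (hb y) (hb₁ y) (hP x y)
          (hab x y) (by linarith)
    _ = 1 + ∑ x, ∑ y, P x y ^ q := by
        simp_rw [mul_add, mul_one, sum_add_distrib, ← hpow (hP _ _)]
        exact congrArg (· + _) hsum

namespace Matrix

section Spectrum

variable {n : Type*} [Fintype n] [DecidableEq n]

lemma map_normSq_mem_doublyStochastic {U : Matrix n n ℂ} (hU : U ∈ unitaryGroup n ℂ) :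
    U.map Complex.normSq ∈ doublyStochastic ℝ n := by
  refine mem_doublyStochastic_iff_sum.mpr
    ⟨fun i j => Complex.normSq_nonneg _, fun i => ?_, fun j => ?_⟩
  · have := congr_fun (congr_fun (mem_unitaryGroup_iff.mp hU) i) i
    simp only [mul_apply, star_apply, Complex.star_def, Complex.mul_conj, one_apply_eq] at this
    exact_mod_cast this
  · have := congr_fun (congr_fun (mem_unitaryGroup_iff'.mp hU) j) j
    simp only [mul_apply, star_apply, Complex.star_def, mul_comm ((starRingEnd ℂ) _),
      Complex.mul_conj, one_apply_eq] at this
    exact_mod_cast this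

lemma IsHermitian.star_eigenvectorUnitary_mul_mul_eigenvectorUnitary {A : Matrix n n ℂ}
    (hA : A.IsHermitian) :
    star (hA.eigenvectorUnitary : Matrix n n ℂ) * A * (hA.eigenvectorUnitary : Matrix n n ℂ) =
      diagonal (RCLike.ofReal ∘ hA.eigenvalues) := by
  rw [← Unitary.conjStarAlgAut_star_apply (S := ℂ), hA.conjStarAlgAut_star_eigenvectorUnitary]

theorem PosSemidef.sum_re_diag_star_mul_mul_rpow_le {A : Matrix n n ℂ} (hA : A.PosSemidef)
    {K : Matrix n n ℂ} (hK : K ∈ unitaryGroup n ℂ) {q : ℝ} (hq : 1 ≤ q) :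
    ∑ i, ((star K * A * K) i i).re ^ q ≤ traceRpow A hA.1 q := by
  set U : Matrix n n ℂ := (hA.1.eigenvectorUnitary : Matrix n n ℂ)
  set W := star K * U
  have hW : W ∈ unitaryGroup n ℂ := mul_mem (Unitary.star_mem hK) hA.1.eigenvectorUnitary.2
  have hconj : star K * A * K = W * diagonal (RCLike.ofReal ∘ hA.1.eigenvalues) * star W := by
    conv_lhs => rw [hA.1.spectral_theorem]
    simp [W, U, star_mul, mul_assoc]
  have hdiag : ∀ i, ((star K * A * K) i i).re = (W.map Complex.normSq *ᵥ hA.1.eigenvalues) i := by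
    intro i
    rw [hconj, mul_apply]
    simp only [mul_diagonal, star_apply, Function.comp_apply, Complex.star_def,
      mul_right_comm _ _ ((starRingEnd ℂ) _), Complex.mul_conj, mulVec, dotProduct, map_apply]
    simp [← Complex.ofReal_mul, mul_comm]
  simp_rw [hdiag]
  exact (convexOn_rpow hq).sum_map_mulVec_le (map_normSq_mem_doublyStochastic hW)
    fun i => hA.eigenvalues_nonneg i

open Polynomial in
lemma IsHermitian.traceRpow_eq_sum_roots_X_pow_mul_charpoly {A : Matrix n n ℂ}
    (hA : A.IsHermitian) (a : ℕ) {q : ℝ} (hq : q ≠ 0) :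
    traceRpow A hA q = ((X ^ a * A.charpoly).roots.map fun z : ℂ => z.re ^ q).sum := by
  rw [roots_mul ((monic_X_pow a).mul A.charpoly_monic).ne_zero, roots_X_pow,
    hA.roots_charpoly_eq_eigenvalues]
  simp [traceRpow, Multiset.map_nsmul, Real.zero_rpow hq, Multiset.sum_nsmul]

open Polynomial in
theorem traceRpow_eq_of_X_pow_mul_charpoly_eq {m : Type*} [Fintype m] [DecidableEq m]
    {A : Matrix n n ℂ} {B : Matrix m m ℂ} (hA : A.IsHermitian) (hB : B.IsHermitian) {a b : ℕ}
    (h : X ^ a * A.charpoly = X ^ b * B.charpoly) {q : ℝ} (hq : q ≠ 0) :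
    traceRpow A hA q = traceRpow B hB q := by
  rw [hA.traceRpow_eq_sum_roots_X_pow_mul_charpoly a hq, h,
    ← hB.traceRpow_eq_sum_roots_X_pow_mul_charpoly b hq]

theorem traceRpow_mul_conjTranspose_eq_transpose {m : Type*} [Fintype m] [DecidableEq m]
    (Ψ : Matrix n m ℂ) (h₁ : (Ψ * Ψᴴ).IsHermitian) (h₂ : (Ψᵀ * Ψᵀᴴ).IsHermitian) {q : ℝ}
    (hq : q ≠ 0) : traceRpow (Ψ * Ψᴴ) h₁ q = traceRpow (Ψᵀ * Ψᵀᴴ) h₂ q := by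
  refine traceRpow_eq_of_X_pow_mul_charpoly_eq h₁ h₂ (a := Fintype.card m)
    (b := Fintype.card n) ?_ hq
  rw [charpoly_mul_comm', ← charpoly_transpose (Ψᴴ * Ψ), transpose_mul]
  rfl

end Spectrum

section PartialTrace

variable {R X Y : Type*} [Fintype X] [Fintype Y]

lemma sum_star_mul_eq_ite_of_mem_unitaryGroup [DecidableEq X] [CommRing R] [StarRing R]
    {U : Matrix X X R} (hU : U ∈ unitaryGroup X R) (i j : X) :
    ∑ k, star (U i k) * U j k = if i = j then 1 else 0 := by
  have := congr_fun (congr_fun (mem_unitaryGroup_iff.mp hU) j) i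
  simp only [mul_apply, star_apply, one_apply] at this
  simp_rw [mul_comm (star (U i _)), this, eq_comm]

def traceRight [AddCommMonoid R] (σ : Matrix (X × Y) (X × Y) R) : Matrix X X R :=
  of fun x x' => ∑ y, σ (x, y) (x', y)

def traceLeft [AddCommMonoid R] (σ : Matrix (X × Y) (X × Y) R) : Matrix Y Y R :=
  of fun y y' => ∑ x, σ (x, y) (x, y')

variable [CommRing R] [StarRing R]

lemma traceRight_star_kronecker_mul_mul_kronecker [DecidableEq Y] (σ : Matrix (X × Y) (X × Y) R)
    (V : Matrix X X R) {W : Matrix Y Y R} (hW : W ∈ unitaryGroup Y R) :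
    traceRight (star (V ⊗ₖ W) * σ * (V ⊗ₖ W)) = star V * traceRight σ * V := by
  ext x x'
  calc ∑ y, (star (V ⊗ₖ W) * σ * (V ⊗ₖ W)) (x, y) (x', y)
      = ∑ p', ∑ p, star (V p.1 x) * σ p p' * V p'.1 x' * ∑ y, star (W p.2 y) * W p'.2 y := by
        simp only [mul_apply, star_apply, kroneckerMap_apply, sum_mul, mul_sum, star_mul']
        rw [sum_comm]
        refine sum_congr rfl fun p' _ => ?_
        rw [sum_comm]
        exact sum_congr rfl fun p _ => sum_congr rfl fun y _ => by ring
    _ = ∑ x₂, ∑ y, ∑ x₁, star (V x₁ x) * σ (x₁, y) (x₂, y) * V x₂ x' := by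
        simp [sum_star_mul_eq_ite_of_mem_unitaryGroup hW, Fintype.sum_prod_type]
    _ = (star V * traceRight σ * V) x x' := by
        simp only [traceRight, mul_apply, star_apply, of_apply, sum_mul, mul_sum]
        exact sum_congr rfl fun x₂ _ => sum_comm

lemma traceLeft_star_kronecker_mul_mul_kronecker [DecidableEq X] (σ : Matrix (X × Y) (X × Y) R)
    {V : Matrix X X R} (hV : V ∈ unitaryGroup X R) (W : Matrix Y Y R) :
    traceLeft (star (V ⊗ₖ W) * σ * (V ⊗ₖ W)) = star W * traceLeft σ * W := by
  ext y y'
  calc ∑ x, (star (V ⊗ₖ W) * σ * (V ⊗ₖ W)) (x, y) (x, y')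
      = ∑ p', ∑ p, star (W p.2 y) * σ p p' * W p'.2 y' * ∑ x, star (V p.1 x) * V p'.1 x := by
        simp only [mul_apply, star_apply, kroneckerMap_apply, sum_mul, mul_sum, star_mul']
        rw [sum_comm]
        refine sum_congr rfl fun p' _ => ?_
        rw [sum_comm]
        exact sum_congr rfl fun p _ => sum_congr rfl fun x _ => by ring
    _ = ∑ x, ∑ y₂, ∑ y₁, star (W y₁ y) * σ (x, y₁) (x, y₂) * W y₂ y' := by
        simp [sum_star_mul_eq_ite_of_mem_unitaryGroup hV, Fintype.sum_prod_type]
    _ = (star W * traceLeft σ * W) y y' := by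
        simp only [traceLeft, mul_apply, star_apply, of_apply, sum_mul, mul_sum]
        rw [sum_comm]
        exact sum_congr rfl fun y₂ _ => sum_comm

end PartialTrace

theorem PosSemidef.traceRpow_traceRight_add_traceRpow_traceLeft_le {X Y : Type*} [Fintype X]
    [Fintype Y] [DecidableEq X] [DecidableEq Y] {σ : Matrix (X × Y) (X × Y) ℂ}
    (hσ : σ.PosSemidef) (htr : σ.trace = 1) (hR : (traceRight σ).IsHermitian)
    (hL : (traceLeft σ).IsHermitian) {q : ℝ} (hq : 2 ≤ q) :
    traceRpow (traceRight σ) hR q + traceRpow (traceLeft σ) hL q ≤ 1 + traceRpow σ hσ.1 q := by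
  set V : Matrix X X ℂ := (hR.eigenvectorUnitary : Matrix X X ℂ)
  set W : Matrix Y Y ℂ := (hL.eigenvectorUnitary : Matrix Y Y ℂ)
  have hV : V ∈ unitaryGroup X ℂ := hR.eigenvectorUnitary.2
  have hW : W ∈ unitaryGroup Y ℂ := hL.eigenvectorUnitary.2
  have hK : V ⊗ₖ W ∈ unitaryGroup (X × Y) ℂ := kronecker_mem_unitary hV hW
  set τ := star (V ⊗ₖ W) * σ * (V ⊗ₖ W)
  set P : X → Y → ℝ := fun x y => (τ (x, y) (x, y)).re
  have hrow : ∀ x, ∑ y, P x y = hR.eigenvalues x := fun x => by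
    have := congr_fun (congr_fun (traceRight_star_kronecker_mul_mul_kronecker σ V hW) x) x
    rw [hR.star_eigenvectorUnitary_mul_mul_eigenvectorUnitary] at this
    simpa [P, traceRight, ← Complex.re_sum] using congrArg Complex.re this
  have hcol : ∀ y, ∑ x, P x y = hL.eigenvalues y := fun y => by
    have := congr_fun (congr_fun (traceLeft_star_kronecker_mul_mul_kronecker σ hV W) y) y
    rw [hL.star_eigenvectorUnitary_mul_mul_eigenvectorUnitary] at this
    simpa [P, traceLeft, ← Complex.re_sum] using congrArg Complex.re this
  have hP : ∀ x y, 0 ≤ P x y := fun x y => by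
    have := (hσ.conjTranspose_mul_mul_same (V ⊗ₖ W)).diag_nonneg (i := (x, y))
    exact (Complex.le_def.mp this).1
  have hsum : ∑ x, ∑ y, P x y = 1 := by
    have : τ.trace = 1 := by
      rw [trace_mul_cycle, mem_unitaryGroup_iff.mp hK, one_mul, htr]
    simpa [P, trace, ← Complex.re_sum, Fintype.sum_prod_type] using congrArg Complex.re this
  calc traceRpow (traceRight σ) hR q + traceRpow (traceLeft σ) hL q
      = ∑ x, (∑ y, P x y) ^ q + ∑ y, (∑ x, P x y) ^ q := by simp only [traceRpow, hrow, hcol]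
    _ ≤ 1 + ∑ x, ∑ y, P x y ^ q := sum_rpow_sum_add_sum_rpow_sum_le hP hsum hq
    _ ≤ 1 + traceRpow σ hσ.1 q := by
        rw [← Fintype.sum_prod_type']
        gcongr
        exact hσ.sum_re_diag_star_mul_mul_rpow_le hK (by linarith)

end Matrix

lemma Fin.eq_or_eq_or_eq_of_ne {i j k : Fin 3} (hij : i ≠ j) (hjk : j ≠ k) (hik : i ≠ k)
    (m : Fin 3) : m = i ∨ m = j ∨ m = k := by
  omega

noncomputable def Fin.piEquivProdOfNe {β : Fin 3 → Type*} {i j k : Fin 3} (hij : i ≠ j)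
    (hjk : j ≠ k) (hik : i ≠ k) : (∀ m, β m) ≃ (β j × β k) × β i :=
  Equiv.ofBijective (fun f => ((f j, f k), f i)) <| by
    have hmem := Fin.eq_or_eq_or_eq_of_ne hij hjk hik
    refine ⟨fun f g hfg => ?_, fun ⟨⟨x, y⟩, z⟩ => ?_⟩
    · simp only [Prod.mk.injEq] at hfg
      funext m
      rcases hmem m with rfl | rfl | rfl <;> tauto
    · have : ∀ m, Nonempty (β m) := fun m => by
        rcases hmem m with rfl | rfl | rfl
        exacts [⟨z⟩, ⟨x⟩, ⟨y⟩]
      refine ⟨Function.update (Function.update (Function.update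
        (fun m => Classical.choice (this m)) i z) j x) k y, ?_⟩
      simp [Function.update_of_ne, hij, hjk, hik]

@[simp]
lemma Fin.piEquivProdOfNe_apply {β : Fin 3 → Type*} {i j k : Fin 3} (hij : i ≠ j) (hjk : j ≠ k)
    (hik : i ≠ k) (f : ∀ m, β m) : Fin.piEquivProdOfNe hij hjk hik f = ((f j, f k), f i) :=
  rfl

lemma reduced1_apply_eq_sum {n : ℕ} {d : Fin n → ℕ} (ψ : (∀ i, Fin (d i)) → ℂ) {m : Fin n}
    {O : Type*} [Fintype O] (e : (∀ i, Fin (d i)) ≃ Fin (d m) × O)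
    (he : ∀ f x, e (Function.update f m x) = (x, (e f).2)) (x x' : Fin (d m)) :
    reduced1 d ψ m x x' = ∑ o, ψ (e.symm (x, o)) * star (ψ (e.symm (x', o))) := by
  have hm : ∀ p, e.symm p m = p.1 := fun p => by
    simpa using (congrArg Prod.fst (he (e.symm p) (e.symm p m))).symm
  have hupd : ∀ p x', Function.update (e.symm p) m x' = e.symm (x', p.2) := fun p x' =>
    e.injective (by simp [he])
  simp only [reduced1]
  rw [← e.symm.sum_comp, Fintype.sum_prod_type]
  simp [hm, hupd]

lemma traceRpow_congr {m : Type*} [Fintype m] [DecidableEq m] {A B : Matrix m m ℂ} (h : A = B)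
    (hA : A.IsHermitian) (hB : B.IsHermitian) (q : ℝ) : traceRpow A hA q = traceRpow B hB q := by
  subst h
  rfl

theorem traceRpow_reduced1_add_traceRpow_reduced1_le (d : Fin 3 → ℕ) (ψ : (∀ i, Fin (d i)) → ℂ)
    (hψ : ∑ f, Complex.normSq (ψ f) = 1) {q : ℝ} (hq : 2 ≤ q)
    (hherm : ∀ j, (reduced1 d ψ j).IsHermitian) {i j k : Fin 3} (hij : i ≠ j) (hjk : j ≠ k)
    (hik : i ≠ k) :
    traceRpow (reduced1 d ψ j) (hherm j) q + traceRpow (reduced1 d ψ k) (hherm k) q ≤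
      1 + traceRpow (reduced1 d ψ i) (hherm i) q := by
  set e := Fin.piEquivProdOfNe (β := fun m => Fin (d m)) hij hjk hik
  set Ψ : Matrix (Fin (d j) × Fin (d k)) (Fin (d i)) ℂ := of fun o z => ψ (e.symm (o, z))
  have hj : reduced1 d ψ j = traceRight (Ψ * Ψᴴ) := by
    ext x x'
    rw [reduced1_apply_eq_sum ψ (e.trans (Equiv.prodAssoc _ _ _))
      (by simp [e, Function.update_of_ne, hij, hjk.symm])]
    simp [traceRight, mul_apply, Fintype.sum_prod_type, Ψ]
  have hk : reduced1 d ψ k = traceLeft (Ψ * Ψᴴ) := by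
    ext y y'
    rw [reduced1_apply_eq_sum ψ (e.trans (((Equiv.prodComm _ _).prodCongr (Equiv.refl _)).trans
      (Equiv.prodAssoc _ _ _))) (by simp [e, Function.update_of_ne, hik, hjk])]
    simp [traceLeft, mul_apply, Fintype.sum_prod_type, Ψ]
  have hi : reduced1 d ψ i = Ψᵀ * Ψᵀᴴ := by
    ext z z'
    rw [reduced1_apply_eq_sum ψ (e.trans (Equiv.prodComm _ _))
      (by simp [e, Function.update_of_ne, hij.symm, hik.symm])]
    simp [mul_apply, Fintype.sum_prod_type, Ψ]
  have htr : (Ψ * Ψᴴ).trace = 1 :=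
    calc (Ψ * Ψᴴ).trace = ∑ p, (Complex.normSq (ψ (e.symm p)) : ℂ) := by
          simp [trace, mul_apply, Ψ, Fintype.sum_prod_type, Complex.mul_conj]
      _ = 1 := by
          rw [e.symm.sum_comp fun f => (Complex.normSq (ψ f) : ℂ)]
          exact_mod_cast hψ
  calc traceRpow (reduced1 d ψ j) (hherm j) q + traceRpow (reduced1 d ψ k) (hherm k) q
      = traceRpow (traceRight (Ψ * Ψᴴ)) (hj ▸ hherm j) q
          + traceRpow (traceLeft (Ψ * Ψᴴ)) (hk ▸ hherm k) q := by
        rw [traceRpow_congr hj, traceRpow_congr hk]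
    _ ≤ 1 + traceRpow (Ψ * Ψᴴ) (posSemidef_self_mul_conjTranspose Ψ).1 q :=
        (posSemidef_self_mul_conjTranspose Ψ).traceRpow_traceRight_add_traceRpow_traceLeft_le htr
          _ _ hq
    _ = 1 + traceRpow (reduced1 d ψ i) (hherm i) q := by
        rw [traceRpow_mul_conjTranspose_eq_transpose Ψ _ (hi ▸ hherm i) (by positivity),
          traceRpow_congr hi.symm]

theorem stmt5_general (d : Fin 3 → ℕ)
    (ψ : (∀ i, Fin (d i)) → ℂ) (hψ : ∑ f, Complex.normSq (ψ f) = 1)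
    (q : ℝ) (hq : 2 ≤ q)
    (hherm : ∀ j, (reduced1 d ψ j).IsHermitian)
    (i j k : Fin 3) (hij : i ≠ j) (hjk : j ≠ k) (hik : i ≠ k) :
    |FqEnt (reduced1 d ψ j) (hherm j) q - FqEnt (reduced1 d ψ k) (hherm k) q| ≤
        FqEnt (reduced1 d ψ i) (hherm i) q ∧
      FqEnt (reduced1 d ψ i) (hherm i) q ≤
        FqEnt (reduced1 d ψ j) (hherm j) q + FqEnt (reduced1 d ψ k) (hherm k) q := by
  have hi := traceRpow_reduced1_add_traceRpow_reduced1_le d ψ hψ hq hherm hij hjk hik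
  have hj := traceRpow_reduced1_add_traceRpow_reduced1_le d ψ hψ hq hherm hjk hik.symm hij.symm
  have hk := traceRpow_reduced1_add_traceRpow_reduced1_le d ψ hψ hq hherm hik.symm hij hjk.symm
  simp only [FqEnt]
  refine ⟨abs_sub_le_iff.mpr ⟨?_, ?_⟩, ?_⟩ <;> linarith

theorem stmt5 (d : Fin 3 → ℕ) (hd : ∀ i, 2 ≤ d i)
    (ψ : (∀ i, Fin (d i)) → ℂ) (hψ : ∑ f, Complex.normSq (ψ f) = 1)
    (q : ℝ) (hq : 2 ≤ q)
    (hherm : ∀ j, (reduced1 d ψ j).IsHermitian)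
    (i j k : Fin 3) (hij : i ≠ j) (hjk : j ≠ k) (hik : i ≠ k) :
    |FqEnt (reduced1 d ψ j) (hherm j) q - FqEnt (reduced1 d ψ k) (hherm k) q| ≤
        FqEnt (reduced1 d ψ i) (hherm i) q ∧
      FqEnt (reduced1 d ψ i) (hherm i) q ≤
        FqEnt (reduced1 d ψ j) (hherm j) q + FqEnt (reduced1 d ψ k) (hherm k) q :=
  stmt5_general d ψ hψ q hq hherm i j k hij hjk hik
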